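/- arXiv:1307.4028 — 5 statements merged into one kernel-verified Lean document; each statement's English description precedes it below -/
import Mathlib

section
/- If X and Y are locally compact Hausdorff spaces such that the C*-algebras C₀(X, ℂ) and C₀(Y, ℂ) are *-isomorphic (as star-algebras), then X and Y are homeomorphic. -/
/-!
The unitization of `C₀(X, 𝕜)` is `C(OnePoint X, 𝕜)`, the scalar part of an element being its
value at `∞`. A *-isomorphism `C₀(X, 𝕜) ≃ C₀(Y, 𝕜)` therefore extends to a *-isomorphism
`C(OnePoint X, 𝕜) ≃ C(OnePoint Y, 𝕜)` that preserves evaluation at `∞`. Gelfand duality for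
the compact Hausdorff spaces `OnePoint X`, `OnePoint Y` turns it into a homeomorphism between
them fixing `∞`, which restricts to a homeomorphism between `X` and `Y`.
-/

open scoped ZeroAtInfty

open Filter OnePoint WeakDual

namespace Unitization

variable {R A B : Type*} [CommSemiring R] [StarRing R]
  [NonUnitalSemiring A] [StarRing A] [Module R A] [SMulCommClass R A A] [IsScalarTower R A A]
  [NonUnitalSemiring B] [StarRing B] [Module R B] [SMulCommClass R B B] [IsScalarTower R B B]
  [StarModule R B]

@[simp] lemma fst_starMap (φ : A →⋆ₙₐ[R] B) (u : Unitization R A) :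
    (starMap φ u).fst = u.fst := by
  induction u using Unitization.ind with
  | inl_add_inr r a => simp [algebraMap_eq_inl]

noncomputable def starMapEquiv (ψ : A ≃⋆ₐ[R] B) : Unitization R A ≃⋆ₐ[R] Unitization R B :=
  .ofBijective (starMap (ψ : A →⋆ₙₐ[R] B))
    ⟨starMap_injective ψ.injective, starMap_surjective ψ.surjective⟩

@[simp] lemma fst_starMapEquiv (ψ : A ≃⋆ₐ[R] B) (u : Unitization R A) :
    (starMapEquiv ψ u).fst = u.fst :=
  fst_starMap _ u

end Unitization

namespace ZeroAtInftyContinuousMap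

variable {𝕜 X Y : Type*} [CommRing 𝕜] [StarRing 𝕜] [TopologicalSpace 𝕜] [IsTopologicalRing 𝕜]
  [ContinuousStar 𝕜] [TopologicalSpace X] [T2Space X] [TopologicalSpace Y] [T2Space Y]

variable (𝕜 X) in
noncomputable def toOnePoint : C₀(X, 𝕜) →⋆ₙₐ[𝕜] C(OnePoint X, 𝕜) where
  toFun f := continuousMapMk f.toContinuousMap 0
    (by simpa [coclosedCompact_eq_cocompact] using zero_at_infty f)
  map_smul' c f := by ext p; induction p using OnePoint.rec <;> simp [continuousMapMk]
  map_zero' := by ext p; induction p using OnePoint.rec <;> simp [continuousMapMk]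
  map_add' f g := by ext p; induction p using OnePoint.rec <;> simp [continuousMapMk]
  map_mul' f g := by ext p; induction p using OnePoint.rec <;> simp [continuousMapMk]
  map_star' f := by ext p; induction p using OnePoint.rec <;> simp [continuousMapMk]

@[simp] lemma toOnePoint_apply_coe (f : C₀(X, 𝕜)) (x : X) : toOnePoint 𝕜 X f x = f x := rfl

@[simp] lemma toOnePoint_apply_infty (f : C₀(X, 𝕜)) : toOnePoint 𝕜 X f ∞ = 0 := rfl

lemma starLift_toOnePoint_apply (u : Unitization 𝕜 C₀(X, 𝕜)) (p : OnePoint X) :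
    Unitization.starLift (toOnePoint 𝕜 X) u p = u.fst + toOnePoint 𝕜 X u.snd p := rfl

lemma starLift_toOnePoint_bijective :
    Function.Bijective (Unitization.starLift (toOnePoint 𝕜 X)) := by
  constructor
  · intro u v huv
    have hfst : u.fst = v.fst := by
      simpa only [starLift_toOnePoint_apply, toOnePoint_apply_infty, add_zero] using congr($huv ∞)
    refine Unitization.ext hfst (ext fun x ↦ ?_)
    simpa only [starLift_toOnePoint_apply, toOnePoint_apply_coe, hfst, add_right_inj]
      using congr($huv x)
  · intro g
    have hg : Tendsto (fun x : X ↦ g x - g ∞) (cocompact X) (nhds 0) := by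
      rw [← coclosedCompact_eq_cocompact, ← sub_self (g ∞)]
      exact ((g.continuous.tendsto ∞).comp tendsto_coe_infty).sub_const _
    let f : C₀(X, 𝕜) :=
      ⟨⟨fun x ↦ g x - g ∞, (g.continuous.comp continuous_coe).sub continuous_const⟩, hg⟩
    refine ⟨Unitization.inl (g ∞) + Unitization.inr f, ContinuousMap.ext fun p ↦ ?_⟩
    rw [starLift_toOnePoint_apply]
    induction p using OnePoint.rec <;> simp [f]

variable (𝕜 X) in
noncomputable def unitizationEquivOnePoint : Unitization 𝕜 C₀(X, 𝕜) ≃⋆ₐ[𝕜] C(OnePoint X, 𝕜) :=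
  .ofBijective _ starLift_toOnePoint_bijective

@[simp] lemma unitizationEquivOnePoint_apply_infty (u : Unitization 𝕜 C₀(X, 𝕜)) :
    unitizationEquivOnePoint 𝕜 X u ∞ = u.fst :=
  (starLift_toOnePoint_apply u ∞).trans (add_zero _)

noncomputable def onePointStarAlgEquiv (ψ : C₀(X, 𝕜) ≃⋆ₐ[𝕜] C₀(Y, 𝕜)) :
    C(OnePoint X, 𝕜) ≃⋆ₐ[𝕜] C(OnePoint Y, 𝕜) :=
  (unitizationEquivOnePoint 𝕜 X).symm.trans <|
    (Unitization.starMapEquiv ψ).trans (unitizationEquivOnePoint 𝕜 Y)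

@[simp] lemma onePointStarAlgEquiv_apply_infty (ψ : C₀(X, 𝕜) ≃⋆ₐ[𝕜] C₀(Y, 𝕜))
    (g : C(OnePoint X, 𝕜)) : onePointStarAlgEquiv ψ g ∞ = g ∞ := by
  conv_rhs => rw [← (unitizationEquivOnePoint 𝕜 X).apply_symm_apply g]
  simp only [onePointStarAlgEquiv, StarAlgEquiv.trans_apply, unitizationEquivOnePoint_apply_infty,
    Unitization.fst_starMapEquiv]

end ZeroAtInftyContinuousMap

namespace WeakDual.CharacterSpace

variable {𝕜 A B : Type*} [NontriviallyNormedField 𝕜]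
  [NormedRing A] [NormedAlgebra 𝕜 A] [CompleteSpace A] [StarRing A]
  [NormedRing B] [NormedAlgebra 𝕜 B] [CompleteSpace B] [StarRing B]

noncomputable def homeomorphOfStarAlgEquiv (Φ : A ≃⋆ₐ[𝕜] B) :
    characterSpace 𝕜 B ≃ₜ characterSpace 𝕜 A where
  toFun := compContinuousMap (Φ : A →⋆ₐ[𝕜] B)
  invFun := compContinuousMap (Φ.symm : B →⋆ₐ[𝕜] A)
  left_inv φ := by ext; simp
  right_inv φ := by ext; simp
  continuous_toFun := map_continuous _
  continuous_invFun := map_continuous _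

end WeakDual.CharacterSpace

namespace ContinuousMap

variable {𝕜 X Y : Type*} [RCLike 𝕜] [TopologicalSpace X] [CompactSpace X] [T2Space X]
  [TopologicalSpace Y] [CompactSpace Y] [T2Space Y]

noncomputable def homeomorphOfStarAlgEquiv (Φ : C(X, 𝕜) ≃⋆ₐ[𝕜] C(Y, 𝕜)) : Y ≃ₜ X :=
  (CharacterSpace.homeoEval Y 𝕜).trans <|
    (CharacterSpace.homeomorphOfStarAlgEquiv Φ).trans (CharacterSpace.homeoEval X 𝕜).symm

lemma apply_homeomorphOfStarAlgEquiv (Φ : C(X, 𝕜) ≃⋆ₐ[𝕜] C(Y, 𝕜)) (g : C(X, 𝕜)) (y : Y) :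
    g (homeomorphOfStarAlgEquiv Φ y) = Φ g y := by
  have homeoEval_apply (x : X) : CharacterSpace.homeoEval X 𝕜 x g = g x := rfl
  rw [← homeoEval_apply, homeomorphOfStarAlgEquiv, Homeomorph.trans_apply,
    Homeomorph.trans_apply, Homeomorph.apply_symm_apply]
  rfl

end ContinuousMap

noncomputable def Homeomorph.restrictOnePoint {X Y : Type*} [TopologicalSpace X]
    [TopologicalSpace Y] (h : OnePoint X ≃ₜ OnePoint Y) (h_infty : h ∞ = ∞) : X ≃ₜ Y :=
  have mem_range_iff (p : OnePoint X) :
      p ∈ Set.range OnePoint.some ↔ h p ∈ Set.range OnePoint.some := by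
    simp only [← compl_infty, Set.mem_compl_singleton_iff, ← h_infty, h.injective.ne_iff]
  isOpenEmbedding_coe.isEmbedding.toHomeomorph.trans <|
    (h.subtype mem_range_iff).trans isOpenEmbedding_coe.isEmbedding.toHomeomorph.symm

noncomputable def ZeroAtInftyContinuousMap.homeomorphOfStarAlgEquiv {𝕜 X Y : Type*} [RCLike 𝕜]
    [TopologicalSpace X] [LocallyCompactSpace X] [T2Space X]
    [TopologicalSpace Y] [LocallyCompactSpace Y] [T2Space Y]
    (ψ : C₀(X, 𝕜) ≃⋆ₐ[𝕜] C₀(Y, 𝕜)) : Y ≃ₜ X :=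
  (ContinuousMap.homeomorphOfStarAlgEquiv (onePointStarAlgEquiv ψ)).restrictOnePoint <|
    (CharacterSpace.homeoEval (OnePoint X) 𝕜).injective <| CharacterSpace.ext fun g ↦
      (ContinuousMap.apply_homeomorphOfStarAlgEquiv _ g ∞).trans
        (onePointStarAlgEquiv_apply_infty ψ g)

/-- If `X` and `Y` are locally compact Hausdorff spaces with `C₀(X, ℂ)` and `C₀(Y, ℂ)`
*-isomorphic as star-algebras, then `X` and `Y` are homeomorphic. -/
theorem stmt_3 (X Y : Type*) [TopologicalSpace X] [LocallyCompactSpace X] [T2Space X]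
    [TopologicalSpace Y] [LocallyCompactSpace Y] [T2Space Y]
    (h : Nonempty (C₀(X, ℂ) ≃⋆ₐ[ℂ] C₀(Y, ℂ))) :
    Nonempty (X ≃ₜ Y) :=
  h.map fun ψ ↦ (ZeroAtInftyContinuousMap.homeomorphOfStarAlgEquiv ψ).symm
end

section
/- Let X and Y be compact Hausdorff spaces. The assignment sending a continuous map φ : X → Y to the map Φ : C(Y, ℂ) → C(X, ℂ) defined by Φ(f) = f ∘ φ is a bijection from the set of continuous maps X → Y onto the set of unital *-homomorphisms from C(Y, ℂ) to C(X, ℂ). In particular, every unital *-homomorphism Φ : C(Y, ℂ) → C(X, ℂ) is of the form Φ(f) = f ∘ φ for a unique continuous φ : X → Y. -/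
open WeakDual WeakDual.CharacterSpace

/-- For compact Hausdorff `X`, `Y`, the assignment `φ ↦ (f ↦ f ∘ φ)` is a bijection
from continuous maps `X → Y` onto unital *-homomorphisms `C(Y, ℂ) → C(X, ℂ)`; in
particular every unital *-homomorphism `Φ : C(Y, ℂ) → C(X, ℂ)` is of the form
`Φ(f) = f ∘ φ` for a unique continuous `φ : X → Y`. -/
theorem stmt_4 (X Y : Type*) [TopologicalSpace X] [CompactSpace X] [T2Space X]
    [TopologicalSpace Y] [CompactSpace Y] [T2Space Y] :
    Function.Bijective
      (fun φ : C(X, Y) => (ContinuousMap.compStarAlgHom' ℂ ℂ φ : C(Y, ℂ) →⋆ₐ[ℂ] C(X, ℂ))) ∧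
    ∀ Φ : C(Y, ℂ) →⋆ₐ[ℂ] C(X, ℂ), ∃! φ : C(X, Y), ∀ f : C(Y, ℂ), Φ f = f.comp φ := by
  have key : ∀ Φ : C(Y, ℂ) →⋆ₐ[ℂ] C(X, ℂ), ∀ φ : C(X, Y),
      (∀ f : C(Y, ℂ), Φ f = f.comp φ) ↔ ContinuousMap.compStarAlgHom' ℂ ℂ φ = Φ := by
    intro Φ φ
    constructor
    · intro h; exact StarAlgHom.ext fun f => (h f).symm
    · intro h f; rw [← h]; rfl
  have hinj : Function.Injective
      (fun φ : C(X, Y) => (ContinuousMap.compStarAlgHom' ℂ ℂ φ : C(Y, ℂ) →⋆ₐ[ℂ] C(X, ℂ))) := by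
    intro φ ψ h
    have h2 : (homeoEval Y ℂ : C(Y, characterSpace ℂ C(Y, ℂ))).comp φ =
        (homeoEval Y ℂ : C(Y, characterSpace ℂ C(Y, ℂ))).comp ψ := by
      dsimp only at h
      rw [homeoEval_naturality, homeoEval_naturality, h]
    ext x
    have := ContinuousMap.congr_fun h2 x
    exact (homeoEval Y ℂ).injective this
  have hsurj : Function.Surjective
      (fun φ : C(X, Y) => (ContinuousMap.compStarAlgHom' ℂ ℂ φ : C(Y, ℂ) →⋆ₐ[ℂ] C(X, ℂ))) := by
    intro Φ
    refine ⟨(ContinuousMap.comp (homeoEval Y ℂ).symm <|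
      (compContinuousMap Φ).comp (homeoEval X ℂ : C(X, characterSpace ℂ C(X, ℂ)))), ?_⟩
    ext f x
    show f _ = Φ f x
    have : (homeoEval Y ℂ) ((homeoEval Y ℂ).symm ((compContinuousMap Φ) (homeoEval X ℂ x)))
        = (compContinuousMap Φ) (homeoEval X ℂ x) := (homeoEval Y ℂ).apply_symm_apply _
    calc f ((homeoEval Y ℂ).symm ((compContinuousMap Φ) (homeoEval X ℂ x)))
        = ((homeoEval Y ℂ) ((homeoEval Y ℂ).symm ((compContinuousMap Φ) (homeoEval X ℂ x)))) f := by
          rfl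
      _ = ((compContinuousMap Φ) (homeoEval X ℂ x)) f := by rw [this]
      _ = Φ f x := rfl
  refine ⟨⟨hinj, hsurj⟩, fun Φ => ?_⟩
  obtain ⟨φ, hφ⟩ := hsurj Φ
  exact ⟨φ, (key Φ φ).mpr hφ, fun ψ hψ => hinj (((key Φ ψ).mp hψ).trans hφ.symm)⟩
end

section
/- Let G be a nonempty compact Hausdorff space equipped with a continuous associative multiplication μ : G × G → G which satisfies cancellation on both sides (i.e., st = s't implies s = s', and ts = ts' implies s = s'). Then G is a compact topological group: there exists an identity element, every element has an inverse, and the inversion map is continuous. -/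
/-!
By Ellis–Numakura a compact Hausdorff semigroup has an idempotent `e`, and under cancellation
`e` is a two-sided identity and the only idempotent. For each `g` the compact subsemigroup `g G`
has an idempotent too, so `e ∈ g G`: every element has a right inverse, which is then two-sided.
Inversion has the closed graph `{(g, h) | g * h = e}` with compact codomain, hence is continuous.
-/

theorem continuous_of_isClosed_graph {X Y : Type*} [TopologicalSpace X] [TopologicalSpace Y]
    [CompactSpace Y] {f : X → Y} (hf : IsClosed {p : X × Y | f p.1 = p.2}) : Continuous f := by
  refine continuous_iff_isClosed.mpr fun F hF => ?_
  have hpre : f ⁻¹' F = Prod.fst '' ({p : X × Y | f p.1 = p.2} ∩ Prod.snd ⁻¹' F) := by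
    ext x
    constructor
    · exact fun hx => ⟨(x, f x), ⟨rfl, hx⟩, rfl⟩
    · rintro ⟨⟨x, y⟩, ⟨hxy : f x = y, hy⟩, rfl⟩
      exact hxy ▸ hy
  rw [hpre]
  exact isClosedMap_fst_of_compactSpace _ (hf.inter (hF.preimage continuous_snd))

namespace IsIdempotentElem

variable {G : Type*} [Semigroup G] {e : G}

theorem left_identity [IsLeftCancelMul G] (he : IsIdempotentElem e) (g : G) : e * g = g :=
  mul_left_cancel (a := e) (by rw [← mul_assoc, he.eq])

theorem right_identity [IsRightCancelMul G] (he : IsIdempotentElem e) (g : G) : g * e = g :=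
  mul_right_cancel (b := e) (by rw [mul_assoc, he.eq])

theorem eq_of_isIdempotentElem [IsCancelMul G] (he : IsIdempotentElem e) {m : G}
    (hm : IsIdempotentElem m) : m = e :=
  mul_right_cancel (b := m) (by rw [hm.eq, he.left_identity])

theorem mul_eq_of_mul_eq [IsCancelMul G] (he : IsIdempotentElem e) {g h : G}
    (hgh : g * h = e) : h * g = e := by
  refine he.eq_of_isIdempotentElem ?_
  rw [IsIdempotentElem, mul_assoc, ← mul_assoc g, hgh, he.left_identity]

end IsIdempotentElem

theorem IsIdempotentElem.exists_mul_eq {G : Type*} [Semigroup G] [IsCancelMul G]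
    [TopologicalSpace G] [CompactSpace G] [T2Space G] [SeparatelyContinuousMul G] {e : G}
    (he : IsIdempotentElem e) (g : G) : ∃ h, g * h = e := by
  have hsub : ∀ x ∈ Set.range (g * ·), ∀ y ∈ Set.range (g * ·), x * y ∈ Set.range (g * ·) := by
    rintro _ ⟨a, rfl⟩ _ ⟨b, rfl⟩
    exact ⟨a * (g * b), (mul_assoc _ _ _).symm⟩
  obtain ⟨m, ⟨h, rfl⟩, hm⟩ := exists_idempotent_in_compact_subsemigroup continuous_mul_const
    _ ⟨_, Set.mem_range_self g⟩ (isCompact_range (continuous_const_mul g)) hsub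
  exact ⟨h, he.eq_of_isIdempotentElem hm⟩

theorem continuous_of_forall_mul_eq {G : Type*} [Mul G] [IsLeftCancelMul G] [TopologicalSpace G]
    [CompactSpace G] [T1Space G] [ContinuousMul G] {e : G} {inv : G → G}
    (hinv : ∀ g, g * inv g = e) : Continuous inv := by
  have hgraph : {p : G × G | inv p.1 = p.2} = (fun p => p.1 * p.2) ⁻¹' {e} := by
    ext ⟨g, h⟩
    simp only [Set.mem_ofPred_eq, Set.mem_preimage, Set.mem_singleton_iff]
    exact ⟨fun hh => hh ▸ hinv g, fun hh => mul_left_cancel ((hinv g).trans hh.symm)⟩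
  apply continuous_of_isClosed_graph
  rw [hgraph]
  exact isClosed_singleton.preimage continuous_mul

/-- A nonempty compact Hausdorff space with a continuous associative multiplication
satisfying two-sided cancellation is a compact topological group: it has an identity,
every element has a two-sided inverse, and inversion is continuous. -/
theorem stmt_7 (G : Type*) [TopologicalSpace G] [CompactSpace G] [T2Space G] [Nonempty G]
    (μ : G → G → G) (hcont : Continuous fun p : G × G => μ p.1 p.2)
    (hassoc : ∀ a b c : G, μ (μ a b) c = μ a (μ b c))
    (hrc : ∀ s s' t : G, μ s t = μ s' t → s = s')
    (hlc : ∀ t s s' : G, μ t s = μ t s' → s = s') :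
    ∃ e : G, (∀ g : G, μ e g = g ∧ μ g e = g) ∧
      ∃ inv : G → G, Continuous inv ∧ ∀ g : G, μ g (inv g) = e ∧ μ (inv g) g = e := by
  let _ : Semigroup G := { mul := μ, mul_assoc := hassoc }
  have : IsCancelMul G :=
    { mul_left_cancel := fun t _ _ => hlc t _ _, mul_right_cancel := fun t _ _ => hrc _ _ t }
  have : ContinuousMul G := ⟨hcont⟩
  obtain ⟨e, he⟩ : ∃ e : G, IsIdempotentElem e :=
    exists_idempotent_of_compact_t2_of_continuous_mul_left continuous_mul_const
  choose inv hinv using he.exists_mul_eq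
  exact ⟨e, fun g => ⟨he.left_identity g, he.right_identity g⟩,
    inv, continuous_of_forall_mul_eq hinv, fun g => ⟨hinv g, he.mul_eq_of_mul_eq (hinv g)⟩⟩
end

section
/- Let G be a nonempty compact Hausdorff space with a continuous associative multiplication μ : G × G → G. Then the linear span of the set of functions { (s, t) ↦ f(μ(s, t))·g(t) : f, g ∈ C(G, ℂ) } is dense in C(G × G, ℂ) (sup norm) and the linear span of { (s, t) ↦ f(s)·g(μ(s, t)) : f, g ∈ C(G, ℂ) } is dense in C(G × G, ℂ), if and only if μ satisfies cancellation from the right and from the left (st = s't implies s = s', and ts = ts' implies s = s'). -/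
/-!
A product `f (u y) * g (v y)` only sees the point `(u y, v y)`, so the span of such products
can only be dense if `y ↦ (u y, v y)` is injective. Conversely these products form a
star-closed submonoid of `C(Y, ℂ)`, and injectivity makes it separate points, so its span is the
star subalgebra it generates and is dense by Stone–Weierstrass. For
`(u, v) = (μ, snd)` and `(fst, μ)` injectivity is right and left cancellation.
-/

open Submodule

namespace ContinuousMap

variable {𝕜 : Type*} [RCLike 𝕜]

theorem exists_ne_of_t35Space {X : Type*} [TopologicalSpace X] [T35Space X] {x y : X}
    (hxy : x ≠ y) : ∃ f : C(X, 𝕜), f x ≠ f y := by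
  obtain ⟨f, hf, hfxy⟩ := separatesPoints_continuous_of_t35Space hxy
  exact ⟨⟨fun z => (f z : 𝕜), RCLike.continuous_ofReal.comp hf⟩, by simpa using hfxy⟩

theorem dense_span_of_star_mem_of_separatesPoints {X : Type*} [TopologicalSpace X]
    [CompactSpace X] (M : Submonoid C(X, 𝕜)) (hstar : ∀ f ∈ M, star f ∈ M)
    (hsep : ∀ x y : X, x ≠ y → ∃ f ∈ M, f x ≠ f y) :
    Dense (span 𝕜 (M : Set C(X, 𝕜)) : Set C(X, 𝕜)) := by
  set A := StarAlgebra.adjoin 𝕜 (M : Set C(X, 𝕜))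
  have hstar_subset : star (M : Set C(X, 𝕜)) ⊆ M := fun f hf => by simpa using hstar _ hf
  have hspan : span 𝕜 (M : Set C(X, 𝕜)) = Subalgebra.toSubmodule A.toSubalgebra := by
    rw [StarAlgebra.adjoin_eq_span, Set.union_eq_left.mpr hstar_subset, M.closure_eq]
  have hA : A.SeparatesPoints := fun x y hxy => by
    obtain ⟨f, hfM, hf⟩ := hsep x y hxy
    exact ⟨f, ⟨f, StarAlgebra.subset_adjoin 𝕜 _ hfM, rfl⟩, hf⟩
  rw [hspan]
  change Dense (A : Set C(X, 𝕜))
  rw [dense_iff_closure_eq,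
    ← StarSubalgebra.topologicalClosure_coe,
    starSubalgebra_topologicalClosure_eq_top_of_separatesPoints A hA, StarSubalgebra.coe_top]

theorem eq_of_dense_span_of_forall_apply_eq {Y : Type*} [TopologicalSpace Y] [T35Space Y]
    {S : Set C(Y, 𝕜)} (hS : Dense (span 𝕜 S : Set C(Y, 𝕜))) {y y' : Y}
    (h : ∀ f ∈ S, f y = f y') : y = y' := by
  by_contra hne
  obtain ⟨F, hF⟩ := exists_ne_of_t35Space (𝕜 := 𝕜) hne
  have heval : evalCLM 𝕜 y = evalCLM 𝕜 y' := ContinuousLinearMap.ext_on hS h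
  exact hF (congrArg (· F) heval)

variable (𝕜) in
def mulPullbacks {X Y : Type*} [TopologicalSpace X] [TopologicalSpace Y] (u v : Y → X) :
    Submonoid C(Y, 𝕜) where
  carrier := {h | ∃ f g : C(X, 𝕜), ∀ y, h y = f (u y) * g (v y)}
  one_mem' := ⟨1, 1, by simp⟩
  mul_mem' := by
    rintro _ _ ⟨f, g, hfg⟩ ⟨f', g', hfg'⟩
    exact ⟨f * f', g * g', fun y => by simp only [mul_apply, hfg, hfg']; ring⟩

section mulPullbacks

variable {X Y : Type*} [TopologicalSpace X] [TopologicalSpace Y] {u v : Y → X}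

theorem mem_mulPullbacks {h : C(Y, 𝕜)} :
    h ∈ mulPullbacks 𝕜 u v ↔ ∃ f g : C(X, 𝕜), ∀ y, h y = f (u y) * g (v y) :=
  Iff.rfl

theorem star_mem_mulPullbacks {h : C(Y, 𝕜)} (hh : h ∈ mulPullbacks 𝕜 u v) :
    star h ∈ mulPullbacks 𝕜 u v := by
  obtain ⟨f, g, hfg⟩ := hh
  exact ⟨star f, star g, fun y => by simp [hfg]⟩

theorem separatesPoints_mulPullbacks [T35Space X] (hu : Continuous u) (hv : Continuous v)
    (huv : Function.Injective fun y => (u y, v y)) {y y' : Y} (hne : y ≠ y') :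
    ∃ h ∈ mulPullbacks 𝕜 u v, h y ≠ h y' := by
  by_cases hvy : v y = v y'
  · have huy : u y ≠ u y' := fun huy => hne (huv (Prod.ext huy hvy))
    obtain ⟨f, hf⟩ := exists_ne_of_t35Space (𝕜 := 𝕜) huy
    exact ⟨f.comp ⟨u, hu⟩, ⟨f, 1, by simp⟩, hf⟩
  · obtain ⟨g, hg⟩ := exists_ne_of_t35Space (𝕜 := 𝕜) hvy
    exact ⟨g.comp ⟨v, hv⟩, ⟨1, g, by simp⟩, hg⟩

theorem dense_span_mulPullbacks_iff [T35Space X] [CompactSpace Y] [T2Space Y]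
    (hu : Continuous u) (hv : Continuous v) :
    Dense (span 𝕜 (mulPullbacks 𝕜 u v : Set C(Y, 𝕜)) : Set C(Y, 𝕜)) ↔
      Function.Injective fun y => (u y, v y) := by
  refine ⟨fun hd y y' huv => eq_of_dense_span_of_forall_apply_eq hd ?_, fun huv =>
    dense_span_of_star_mem_of_separatesPoints _ (fun _ => star_mem_mulPullbacks)
      fun _ _ => separatesPoints_mulPullbacks hu hv huv⟩
  rintro _ ⟨f, g, hfg⟩
  obtain ⟨huy, hvy⟩ := Prod.mk.inj huv
  rw [hfg, hfg, huy, hvy]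

end mulPullbacks

end ContinuousMap

section Cancellation

variable {G : Type*} (μ : G → G → G)

theorem injective_mul_snd_iff :
    Function.Injective (fun p : G × G => (μ p.1 p.2, p.2)) ↔
      ∀ s s' t : G, μ s t = μ s' t → s = s' := by
  refine ⟨fun h s s' t hst => congrArg Prod.fst (@h (s, t) (s', t) (Prod.ext hst rfl)), ?_⟩
  rintro h ⟨s, t⟩ ⟨s', t'⟩ hp
  obtain ⟨hμ, rfl⟩ := Prod.mk.inj hp
  rw [h s s' t hμ]

theorem injective_fst_mul_iff :
    Function.Injective (fun p : G × G => (p.1, μ p.1 p.2)) ↔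
      ∀ t s s' : G, μ t s = μ t s' → s = s' := by
  refine ⟨fun h t s s' hts => congrArg Prod.snd (@h (t, s) (t, s') (Prod.ext rfl hts)), ?_⟩
  rintro h ⟨t, s⟩ ⟨t', s'⟩ hp
  obtain ⟨rfl, hμ⟩ := Prod.mk.inj hp
  rw [h t s s' hμ]

end Cancellation

theorem stmt_8_general (G : Type*) [TopologicalSpace G] [CompactSpace G] [T2Space G]
    (μ : G → G → G) (hcont : Continuous fun p : G × G => μ p.1 p.2) :
    (Dense (↑(Submodule.span ℂ
        {h : C(G × G, ℂ) | ∃ f g : C(G, ℂ), ∀ s t : G, h (s, t) = f (μ s t) * g t}) :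
          Set C(G × G, ℂ)) ∧
     Dense (↑(Submodule.span ℂ
        {h : C(G × G, ℂ) | ∃ f g : C(G, ℂ), ∀ s t : G, h (s, t) = f s * g (μ s t)}) :
          Set C(G × G, ℂ)))
    ↔ ((∀ s s' t : G, μ s t = μ s' t → s = s') ∧ (∀ t s s' : G, μ t s = μ t s' → s = s')) := by
  have hright : {h : C(G × G, ℂ) | ∃ f g : C(G, ℂ), ∀ s t : G, h (s, t) = f (μ s t) * g t} =
      ContinuousMap.mulPullbacks ℂ (fun p : G × G => μ p.1 p.2) Prod.snd := by
    ext h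
    simp only [Set.mem_ofPred_eq, SetLike.mem_coe, ContinuousMap.mem_mulPullbacks,
      Prod.forall]
  have hleft : {h : C(G × G, ℂ) | ∃ f g : C(G, ℂ), ∀ s t : G, h (s, t) = f s * g (μ s t)} =
      ContinuousMap.mulPullbacks ℂ Prod.fst (fun p : G × G => μ p.1 p.2) := by
    ext h
    simp only [Set.mem_ofPred_eq, SetLike.mem_coe, ContinuousMap.mem_mulPullbacks,
      Prod.forall]
  rw [hright, hleft, ContinuousMap.dense_span_mulPullbacks_iff hcont continuous_snd,
    ContinuousMap.dense_span_mulPullbacks_iff continuous_fst hcont,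
    injective_mul_snd_iff, injective_fst_mul_iff]

/-- For a nonempty compact Hausdorff space `G` with continuous associative multiplication
`μ`, the two density conditions of Woronowicz (density in `C(G × G, ℂ)` of the spans of
`{(s,t) ↦ f(μ s t) * g t}` and of `{(s,t) ↦ f s * g (μ s t)}`) hold if and only if `μ`
satisfies cancellation from the right and from the left. -/
theorem stmt_8 (G : Type*) [TopologicalSpace G] [CompactSpace G] [T2Space G] [Nonempty G]
    (μ : G → G → G) (hcont : Continuous fun p : G × G => μ p.1 p.2)
    (hassoc : ∀ a b c : G, μ (μ a b) c = μ a (μ b c)) :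
    (Dense (↑(Submodule.span ℂ
        {h : C(G × G, ℂ) | ∃ f g : C(G, ℂ), ∀ s t : G, h (s, t) = f (μ s t) * g t}) :
          Set C(G × G, ℂ)) ∧
     Dense (↑(Submodule.span ℂ
        {h : C(G × G, ℂ) | ∃ f g : C(G, ℂ), ∀ s t : G, h (s, t) = f s * g (μ s t)}) :
          Set C(G × G, ℂ)))
    ↔ ((∀ s s' t : G, μ s t = μ s' t → s = s') ∧ (∀ t s s' : G, μ t s = μ t s' → s = s')) :=
  stmt_8_general G μ hcont
end

section
/- Let A be a C*-algebra, C a unital C*-algebra, and j : A → C an injective *-homomorphism whose image j(A) is a two-sided ideal of C which is essential (every nonzero two-sided ideal of C intersects j(A) nontrivially). Then there exists an injective *-homomorphism κ : C → M(A) into the multiplier algebra of A such that κ(j(a)) = ι(a) for all a ∈ A, where ι : A → M(A) is the canonical embedding. -/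
open scoped MultiplierAlgebra

/-- If a C*-algebra `A` embeds via an injective *-homomorphism `j` into a unital
C*-algebra `C` as an essential two-sided ideal, then there is an injective
*-homomorphism `κ : C → M(A)` with `κ ∘ j = ι`, the canonical embedding `A → M(A)`. -/
theorem stmt_18 (A C : Type*) [NonUnitalCStarAlgebra A] [CStarAlgebra C]
    (j : A →⋆ₙₐ[ℂ] C) (hinj : Function.Injective j)
    (I : TwoSidedIdeal C) (hI : (I : Set C) = Set.range j)
    (hess : ∀ J : TwoSidedIdeal C, (∃ x ∈ J, x ≠ 0) → ∃ y ∈ J, y ≠ 0 ∧ y ∈ Set.range j) :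
    ∃ κ : C →⋆ₙₐ[ℂ] 𝓜(ℂ, A), Function.Injective κ ∧
      ∀ a : A, κ (j a) = DoubleCentralizer.coeHom (𝕜 := ℂ) a := by
  classical
  have hnorm : ∀ a : A, ‖j a‖ = ‖a‖ := fun a => NonUnitalStarAlgHom.norm_map j hinj a
  have hrange : ∀ a : A, j a ∈ (I : Set C) := fun a => hI ▸ Set.mem_range_self a
  have hmemL : ∀ (c : C) (a : A), ∃ b : A, j b = c * j a := by
    intro c a
    have h1 : c * j a ∈ I := I.mul_mem_left c (j a) (hrange a)
    have h2 : c * j a ∈ (I : Set C) := h1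
    rw [hI] at h2
    obtain ⟨b, hb⟩ := h2
    exact ⟨b, hb⟩
  have hmemR : ∀ (c : C) (a : A), ∃ b : A, j b = j a * c := by
    intro c a
    have h1 : j a * c ∈ I := I.mul_mem_right (j a) c (hrange a)
    have h2 : j a * c ∈ (I : Set C) := h1
    rw [hI] at h2
    obtain ⟨b, hb⟩ := h2
    exact ⟨b, hb⟩
  choose L hL using hmemL
  choose R hR using hmemR
  -- L c is linear and bounded
  have hLadd : ∀ (c : C) (a b : A), L c (a + b) = L c a + L c b := by
    intro c a b; apply hinj; simp [hL, mul_add]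
  have hLsmul : ∀ (c : C) (k : ℂ) (a : A), L c (k • a) = k • L c a := by
    intro c k a; apply hinj; simp [hL, mul_smul_comm]
  have hRadd : ∀ (c : C) (a b : A), R c (a + b) = R c a + R c b := by
    intro c a b; apply hinj; simp [hR, add_mul]
  have hRsmul : ∀ (c : C) (k : ℂ) (a : A), R c (k • a) = k • R c a := by
    intro c k a; apply hinj; simp [hR, smul_mul_assoc]
  have hLbound : ∀ (c : C) (a : A), ‖L c a‖ ≤ ‖c‖ * ‖a‖ := by
    intro c a
    rw [← hnorm (L c a), hL, ← hnorm a]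
    exact norm_mul_le _ _
  have hRbound : ∀ (c : C) (a : A), ‖R c a‖ ≤ ‖c‖ * ‖a‖ := by
    intro c a
    rw [← hnorm (R c a), hR, ← hnorm a, mul_comm ‖c‖]
    exact norm_mul_le _ _
  let LL : C → A →L[ℂ] A := fun c =>
    LinearMap.mkContinuous
      { toFun := L c, map_add' := hLadd c, map_smul' := hLsmul c } ‖c‖ (hLbound c)
  let RR : C → A →L[ℂ] A := fun c =>
    LinearMap.mkContinuous
      { toFun := R c, map_add' := hRadd c, map_smul' := hRsmul c } ‖c‖ (hRbound c)
  have hLL : ∀ (c : C) (a : A), LL c a = L c a := fun _ _ => rfl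
  have hRR : ∀ (c : C) (a : A), RR c a = R c a := fun _ _ => rfl
  let κfun : C → 𝓜(ℂ, A) := fun c =>
    { fst := LL c
      snd := RR c
      central := fun x y => by
        apply hinj
        simp only [hLL, hRR, map_mul, hL, hR, mul_assoc] }
  have κfst : ∀ (c : C) (a : A), j ((κfun c).fst a) = c * j a := fun c a => hL c a
  have κsnd : ∀ (c : C) (a : A), j ((κfun c).snd a) = j a * c := fun c a => hR c a
  let κ : C →⋆ₙₐ[ℂ] 𝓜(ℂ, A) :=
    { toFun := κfun
      map_add' := fun c d => by
        refine DoubleCentralizer.ext ℂ A _ _ (Prod.ext ?_ ?_) <;>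
          refine ContinuousLinearMap.ext fun a => hinj ?_
        · simp [κfst, DoubleCentralizer.add_fst, add_mul]
        · simp [κsnd, DoubleCentralizer.add_snd, mul_add]
      map_smul' := fun k c => by
        refine DoubleCentralizer.ext ℂ A _ _ (Prod.ext ?_ ?_) <;>
          refine ContinuousLinearMap.ext fun a => hinj ?_
        · simp [κfst, DoubleCentralizer.smul_fst, smul_mul_assoc]
        · simp [κsnd, DoubleCentralizer.smul_snd, mul_smul_comm]
      map_zero' := by
        refine DoubleCentralizer.ext ℂ A _ _ (Prod.ext ?_ ?_) <;>
          refine ContinuousLinearMap.ext fun a => hinj ?_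
        · simp [κfst, DoubleCentralizer.zero_fst]
        · simp [κsnd, DoubleCentralizer.zero_snd]
      map_mul' := fun c d => by
        refine DoubleCentralizer.ext ℂ A _ _ (Prod.ext ?_ ?_) <;>
          refine ContinuousLinearMap.ext fun a => hinj ?_
        · show j ((κfun (c * d)).fst a) = j ((κfun c).fst ((κfun d).fst a))
          rw [κfst, κfst, κfst, mul_assoc]
        · show j ((κfun (c * d)).snd a) = j ((κfun d).snd ((κfun c).snd a))
          rw [κsnd, κsnd, κsnd, mul_assoc]
      map_star' := fun c => by
        refine DoubleCentralizer.ext ℂ A _ _ (Prod.ext ?_ ?_) <;>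
          refine ContinuousLinearMap.ext fun a => hinj ?_
        · show j ((κfun (star c)).fst a) = j (star ((κfun c).snd (star a)))
          simp only [κfst, κsnd, map_star, star_mul, star_star]
        · show j ((κfun (star c)).snd a) = j (star ((κfun c).fst (star a)))
          simp only [κfst, κsnd, map_star, star_mul, star_star] }
  refine ⟨κ, ?_, ?_⟩
  · apply (injective_iff_map_eq_zero κ).mpr
    intro c hc
    by_contra hcne
    -- from κ c = 0 we get that c annihilates the range of j on both sides
    have hcL : ∀ a : A, c * j a = 0 := by
      intro a
      have h0 : κfun c = (0 : 𝓜(ℂ, A)) := hc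
      have h1 : (κfun c).fst a = 0 := by rw [h0]; rfl
      have := κfst c a
      rw [h1, map_zero] at this
      exact this.symm
    have hcR : ∀ a : A, j a * c = 0 := by
      intro a
      have h0 : κfun c = (0 : 𝓜(ℂ, A)) := hc
      have h1 : (κfun c).snd a = 0 := by rw [h0]; rfl
      have := κsnd c a
      rw [h1, map_zero] at this
      exact this.symm
    -- the two-sided ideal of elements annihilated by range j on both sides
    let J : TwoSidedIdeal C := TwoSidedIdeal.mk'
      {z : C | ∀ a : A, j a * z = 0 ∧ z * j a = 0}
      (fun a => by simp)
      (fun {x y} hx hy a => by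
        obtain ⟨hx1, hx2⟩ := hx a; obtain ⟨hy1, hy2⟩ := hy a
        constructor
        · rw [mul_add, hx1, hy1, add_zero]
        · rw [add_mul, hx2, hy2, add_zero])
      (fun {x} hx a => by
        obtain ⟨hx1, hx2⟩ := hx a
        constructor
        · rw [mul_neg, hx1, neg_zero]
        · rw [neg_mul, hx2, neg_zero])
      (fun {x y} hy a => by
        constructor
        · rw [← mul_assoc, ← hR x a, (hy (R x a)).1]
        · rw [mul_assoc, (hy a).2, mul_zero])
      (fun {x y} hx a => by
        constructor
        · rw [← mul_assoc, (hx a).1, zero_mul]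
        · rw [mul_assoc, ← hL y a, (hx (L y a)).2])
    have hcJ : c ∈ J := by
      rw [TwoSidedIdeal.mem_mk']
      exact fun a => ⟨hcR a, hcL a⟩
    obtain ⟨y, hyJ, hyne, a, ha⟩ := hess J ⟨c, hcJ, hcne⟩
    rw [TwoSidedIdeal.mem_mk'] at hyJ
    have hys : y * star y = 0 := by
      have := (hyJ (star a)).2
      rwa [map_star, ha] at this
    have : ‖y‖ = 0 := by
      have h2 : ‖y * star y‖ = ‖y‖ * ‖y‖ := CStarRing.norm_self_mul_star
      rw [hys, norm_zero] at h2
      exact (mul_self_eq_zero.mp h2.symm)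
    exact hyne (norm_eq_zero.mp this)
  · intro a
    refine DoubleCentralizer.ext ℂ A _ _ (Prod.ext ?_ ?_) <;>
      refine ContinuousLinearMap.ext fun b => hinj ?_
    · show j ((κfun (j a)).fst b) = j (a * b)
      rw [κfst, map_mul]
    · show j ((κfun (j a)).snd b) = j (b * a)
      rw [κsnd, map_mul]
end
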